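/- arXiv:1604.05671 — 6 statements merged into one kernel-verified Lean document; each statement's English description precedes it below -/
import Mathlib

section
/- Let n be a positive integer and let x_1, ..., x_n be complex numbers, each different from 1. Then (∏_{i=1}^{n} (1 - x_i)) · (∑_{i=1}^{n} x_i/(x_i - 1)) = ∑_{k=1}^{n} (-1)^k · k · e_k, where e_k denotes the k-th elementary symmetric polynomial in x_1, ..., x_n. -/
/-- The `k`-th elementary symmetric polynomial in `x 0, …, x (n-1)`. -/
noncomputable def esymm {n : ℕ} (x : Fin n → ℂ) (k : ℕ) : ℂ :=
  ∑ A ∈ Finset.powersetCard k (Finset.univ : Finset (Fin n)), ∏ i ∈ A, x i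

/-!
Clearing denominators, the left side is `∑ᵢ (-xᵢ) ∏_{j ≠ i} (1 - xⱼ)`. With `f = -x`, the term
`fᵢ ∏_{j ≠ i} (1 + fⱼ)` expands to the sum of `∏_{j ∈ t} fⱼ` over the subsets `t` containing `i`,
so every subset `t` is counted `#t` times. Grouping the subsets by size `k` turns
`∑_t #t ∏_{j ∈ t} (-xⱼ)` into `∑_k (-1)^k k e_k`.
-/

open Finset

namespace Finset

variable {ι M R K : Type*}

theorem sum_powerset_filter_mem [DecidableEq ι] [AddCommMonoid M] {s : Finset ι} {i : ι}
    (hi : i ∈ s) (g : Finset ι → M) :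
    ∑ t ∈ s.powerset with i ∈ t, g t = ∑ t ∈ (s.erase i).powerset, g (insert i t) := by
  rw [sum_filter, ← insert_erase hi, sum_powerset_insert (notMem_erase i s), erase_insert_eq_erase,
    erase_idem, sum_eq_zero fun t ht => if_neg fun hit => notMem_erase i s (mem_powerset.1 ht hit),
    zero_add]
  simp only [mem_insert_self, if_true]

theorem sum_powerset_card_nsmul [DecidableEq ι] [AddCommMonoid M] (s : Finset ι)
    (g : Finset ι → M) :
    ∑ t ∈ s.powerset, #t • g t = ∑ i ∈ s, ∑ t ∈ s.powerset with i ∈ t, g t := by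
  simp_rw [← sum_const]
  refine sum_comm' fun t i => ?_
  simp only [mem_powerset, mem_filter]
  constructor
  · rintro ⟨hts, hit⟩
    exact ⟨⟨hts, hit⟩, hts hit⟩
  · rintro ⟨⟨hts, hit⟩, -⟩
    exact ⟨hts, hit⟩

theorem sum_mul_prod_erase_one_add [DecidableEq ι] [CommSemiring R] (s : Finset ι) (f : ι → R) :
    ∑ i ∈ s, f i * ∏ j ∈ s.erase i, (1 + f j) = ∑ t ∈ s.powerset, #t • ∏ i ∈ t, f i := by
  rw [sum_powerset_card_nsmul]
  refine sum_congr rfl fun i hi => ?_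
  rw [sum_powerset_filter_mem hi, prod_one_add, mul_sum]
  refine sum_congr rfl fun t ht => ?_
  rw [prod_insert fun hit => notMem_erase i s (mem_powerset.1 ht hit)]

theorem sum_powerset_card_nsmul_prod_neg [CommRing R] (s : Finset ι) (x : ι → R) :
    ∑ t ∈ s.powerset, #t • ∏ i ∈ t, -x i =
      ∑ k ∈ range (#s + 1), (-1) ^ k * k * ∑ t ∈ powersetCard k s, ∏ i ∈ t, x i := by
  rw [sum_powerset]
  refine sum_congr rfl fun k _ => ?_
  rw [mul_sum]
  refine sum_congr rfl fun t ht => ?_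
  rw [prod_neg, (mem_powersetCard.1 ht).2, nsmul_eq_mul]
  ring

theorem prod_one_sub_mul_sum_div_sub_one [DecidableEq ι] [Field K] {s : Finset ι} {x : ι → K}
    (hx : ∀ i ∈ s, x i ≠ 1) :
    (∏ i ∈ s, (1 - x i)) * ∑ i ∈ s, x i / (x i - 1) =
      ∑ i ∈ s, -x i * ∏ j ∈ s.erase i, (1 - x j) := by
  rw [mul_sum]
  refine sum_congr rfl fun i hi => ?_
  have hxi : x i - 1 ≠ 0 := sub_ne_zero.2 (hx i hi)
  rw [← mul_prod_erase s _ hi]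
  field_simp
  ring

end Finset

theorem stmt_0_general (n : ℕ) (x : Fin n → ℂ) (hx : ∀ i, x i ≠ 1) :
    (∏ i, (1 - x i)) * (∑ i, x i / (x i - 1)) =
      ∑ k ∈ Finset.Icc 1 n, (-1 : ℂ) ^ k * (k : ℂ) * esymm x k := by
  rw [prod_one_sub_mul_sum_div_sub_one fun i _ => hx i]
  simp_rw [sub_eq_add_neg]
  rw [sum_mul_prod_erase_one_add, sum_powerset_card_nsmul_prod_neg, card_univ, Fintype.card_fin,
    sum_range_eq_add_Ico _ n.add_one_pos, Ico_add_one_right_eq_Icc]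
  simp [esymm]

/-- For `x_1, …, x_n ∈ ℂ`, each different from `1`,
`(∏ (1 - x_i)) · (∑ x_i/(x_i - 1)) = ∑_{k=1}^n (-1)^k k e_k`. -/
theorem stmt_0 (n : ℕ) (hn : 0 < n) (x : Fin n → ℂ) (hx : ∀ i, x i ≠ 1) :
    (∏ i, (1 - x i)) * (∑ i, x i / (x i - 1)) =
      ∑ k ∈ Finset.Icc 1 n, (-1 : ℂ) ^ k * (k : ℂ) * esymm x k :=
  stmt_0_general n x hx
end

section
/- Let n be a positive integer and let x_1, ..., x_n be complex numbers, each different from -1. Then (∏_{i=1}^{n} (1 + x_i)) · (∑_{i=1}^{n} x_i/(x_i + 1)) = ∑_{k=1}^{n} k · e_k, where e_k denotes the k-th elementary symmetric polynomial in x_1, ..., x_n. -/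
namespace Finset

variable {ι R : Type*} [CommSemiring R] [DecidableEq ι]

theorem sum_powerset_filter_mem_prod {s : Finset ι} {i : ι} (hi : i ∈ s) (x : ι → R) :
    ∑ A ∈ s.powerset with i ∈ A, ∏ j ∈ A, x j = x i * ∏ j ∈ s.erase i, (1 + x j) := by
  obtain ⟨t, hit, rfl⟩ : ∃ t, i ∉ t ∧ s = insert i t :=
    ⟨s.erase i, notMem_erase i s, (insert_erase hi).symm⟩
  have hiA : ∀ A ∈ t.powerset, i ∉ A := fun A hA hiA => hit (mem_powerset.mp hA hiA)
  rw [sum_filter, sum_powerset_insert hit, erase_insert hit, prod_one_add, mul_sum,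
    sum_eq_zero fun A hA => if_neg (hiA A hA), zero_add]
  exact sum_congr rfl fun A hA => by rw [if_pos (mem_insert_self i A), prod_insert (hiA A hA)]

theorem sum_powerset_card_mul_prod (s : Finset ι) (x : ι → R) :
    ∑ A ∈ s.powerset, (#A : R) * ∏ j ∈ A, x j = ∑ i ∈ s, x i * ∏ j ∈ s.erase i, (1 + x j) :=
  calc ∑ A ∈ s.powerset, (#A : R) * ∏ j ∈ A, x j
      = ∑ A ∈ s.powerset, ∑ _i ∈ A, ∏ j ∈ A, x j := by simp only [sum_const, nsmul_eq_mul]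
    _ = ∑ i ∈ s, ∑ A ∈ s.powerset with i ∈ A, ∏ j ∈ A, x j :=
        sum_comm' fun A i => by
          simp only [mem_filter, mem_powerset]
          exact ⟨fun ⟨hAs, hiA⟩ => ⟨⟨hAs, hiA⟩, hAs hiA⟩, fun ⟨h, _⟩ => h⟩
    _ = ∑ i ∈ s, x i * ∏ j ∈ s.erase i, (1 + x j) :=
        sum_congr rfl fun i hi => sum_powerset_filter_mem_prod hi x

theorem prod_one_add_mul_sum_div {K : Type*} [Field K] {s : Finset ι} {x : ι → K}
    (hx : ∀ i ∈ s, x i + 1 ≠ 0) :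
    (∏ i ∈ s, (1 + x i)) * ∑ i ∈ s, x i / (x i + 1) =
      ∑ i ∈ s, x i * ∏ j ∈ s.erase i, (1 + x j) := by
  rw [mul_sum]
  refine sum_congr rfl fun i hi => ?_
  rw [← mul_prod_erase s _ hi, add_comm 1 (x i)]
  field_simp [hx i hi]

end Finset

open Finset in
theorem sum_Icc_mul_esymm {n : ℕ} (x : Fin n → ℂ) :
    ∑ k ∈ Icc 1 n, (k : ℂ) * esymm x k =
      ∑ A ∈ (univ : Finset (Fin n)).powerset, (#A : ℂ) * ∏ i ∈ A, x i := by
  rw [sum_powerset, card_univ, Fintype.card_fin]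
  calc ∑ k ∈ Icc 1 n, (k : ℂ) * esymm x k
      = ∑ k ∈ range (n + 1), (k : ℂ) * esymm x k :=
        sum_subset (fun k hk => by simp only [mem_Icc, mem_range] at hk ⊢; omega)
          fun k hk hk' => by
            obtain rfl : k = 0 := by simp only [mem_Icc, mem_range] at hk hk'; omega
            rw [Nat.cast_zero, zero_mul]
    _ = _ := sum_congr rfl fun k _ => by
        rw [esymm, mul_sum]
        exact sum_congr rfl fun A hA => by rw [(mem_powersetCard.mp hA).2]

theorem stmt_1_general (n : ℕ) (x : Fin n → ℂ) (hx : ∀ i, x i ≠ -1) :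
    (∏ i, (1 + x i)) * (∑ i, x i / (x i + 1)) =
      ∑ k ∈ Finset.Icc 1 n, (k : ℂ) * esymm x k := by
  rw [sum_Icc_mul_esymm, Finset.sum_powerset_card_mul_prod,
    Finset.prod_one_add_mul_sum_div fun i _ => by simpa [add_eq_zero_iff_eq_neg] using hx i]

/-- For `x_1, …, x_n ∈ ℂ`, each different from `-1`,
`(∏ (1 + x_i)) · (∑ x_i/(x_i + 1)) = ∑_{k=1}^n k e_k`. -/
theorem stmt_1 (n : ℕ) (hn : 0 < n) (x : Fin n → ℂ) (hx : ∀ i, x i ≠ -1) :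
    (∏ i, (1 + x i)) * (∑ i, x i / (x i + 1)) =
      ∑ k ∈ Finset.Icc 1 n, (k : ℂ) * esymm x k :=
  stmt_1_general n x hx
end

section
/- Let f be a multiplicative arithmetic function with complex values, let n be a positive integer, and suppose f(p) ≠ 1 for every prime p dividing n. Then ∑_{d | n} μ(d) ω(d) f(d) = (∑_{d | n} μ(d) f(d)) · (∑_{p | n} f(p)/(f(p) - 1)), where the sum over p runs over the distinct primes dividing n. -/
/-!
Only squarefree divisors contribute, and these are the products `d = ∏ p ∈ t, p` over subsets
`t` of the prime factors of `n`, with `ω(d) = #t` and `μ(d) f(d) = ∏ p ∈ t, (-f p)`. Both sides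
thus become sums over the powerset of `n.primeFactors`, and the identity is the logarithmic
derivative at `x = 1` of `∏ p, (1 + x h p) = ∑ t, x ^ #t ∏ p ∈ t, h p` with `h = -f`.
-/

open ArithmeticFunction Finset

theorem Finset.sum_powerset_card_mul_prod_s3 {ι K : Type*} [DecidableEq ι] [Field K]
    (s : Finset ι) (h : ι → K) (hh : ∀ i ∈ s, 1 + h i ≠ 0) :
    ∑ t ∈ s.powerset, (#t : K) * ∏ i ∈ t, h i =
      (∏ i ∈ s, (1 + h i)) * ∑ i ∈ s, h i / (1 + h i) := by
  induction s using Finset.induction_on with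
  | empty => simp
  | insert a s ha ih =>
    have hinsert : ∀ t ∈ s.powerset, (#(insert a t) : K) * ∏ i ∈ insert a t, h i =
        h a * ((#t : K) * ∏ i ∈ t, h i) + h a * ∏ i ∈ t, h i := by
      intro t ht
      have hat : a ∉ t := fun hat => ha (mem_powerset.mp ht hat)
      rw [card_insert_of_notMem hat, prod_insert hat]
      push_cast
      ring
    have ha0 := hh a (mem_insert_self a s)
    rw [sum_powerset_insert ha, sum_congr rfl hinsert, sum_add_distrib, ← mul_sum, ← mul_sum,
      ← prod_one_add, ih fun i hi => hh i (mem_insert_of_mem hi), prod_insert ha, sum_insert ha]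
    field_simp
    ring

theorem ArithmeticFunction.IsMultiplicative.sum_divisors_moebius_mul
    {R : Type*} [CommRing R] {f : ArithmeticFunction R} (hf : f.IsMultiplicative) {n : ℕ}
    (hn : n ≠ 0) (c : ℕ → R) :
    ∑ d ∈ n.divisors, (moebius d : R) * c #d.primeFactors * f d =
      ∑ t ∈ n.primeFactors.powerset, c #t * ∏ p ∈ t, -f p := by
  rw [← sum_filter_of_ne (p := Squarefree) fun d _ hd => ?squarefree,
    Nat.sum_divisors_filter_squarefree hn, Nat.factors_eq, List.toFinset_coe,
    Nat.toFinset_factors]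
  · refine sum_congr rfl fun t ht => ?_
    have hprime : ∀ p ∈ t, p.Prime := fun p hp =>
      Nat.prime_of_mem_primeFactors (mem_powerset.mp ht hp)
    rw [t.prod_val, Function.id_def, Nat.primeFactors_prod hprime,
      hf.map_prod_of_subset_primeFactors n t (mem_powerset.mp ht),
      isMultiplicative_moebius.map_prod_of_prime t hprime, prod_neg,
      prod_congr rfl fun p hp => moebius_apply_prime (hprime p hp)]
    push_cast
    rw [prod_const]
    ring
  · by_contra hsq
    simp [moebius_eq_zero_of_not_squarefree hsq] at hd

/-- For a multiplicative arithmetic function `f` with `f p ≠ 1` for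
every prime `p ∣ n`,
`∑_{d ∣ n} μ(d) ω(d) f(d) = (∑_{d ∣ n} μ(d) f(d)) · (∑_{p ∣ n} f p / (f p - 1))`. -/
theorem stmt_3 (f : ArithmeticFunction ℂ) (hf : f.IsMultiplicative) (n : ℕ) (hn : 0 < n)
    (hfp : ∀ p : ℕ, p.Prime → p ∣ n → f p ≠ 1) :
    ∑ d ∈ n.divisors, (moebius d : ℂ) * (d.primeFactors.card : ℂ) * f d =
      (∑ d ∈ n.divisors, (moebius d : ℂ) * f d) *
        (∑ p ∈ n.primeFactors, f p / (f p - 1)) := by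
  have hμf : ∑ d ∈ n.divisors, (moebius d : ℂ) * f d = ∏ p ∈ n.primeFactors, (1 + -f p) := by
    simpa [prod_one_add] using hf.sum_divisors_moebius_mul hn.ne' fun _ => 1
  have hne : ∀ p ∈ n.primeFactors, 1 + -f p ≠ 0 := fun p hp => by
    rw [← sub_eq_add_neg, sub_ne_zero]
    exact (hfp p (Nat.prime_of_mem_primeFactors hp) (Nat.dvd_of_mem_primeFactors hp)).symm
  rw [hf.sum_divisors_moebius_mul hn.ne' fun k => (k : ℂ), sum_powerset_card_mul_prod_s3 _ _ hne,
    hμf]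
  congr 1
  refine sum_congr rfl fun p _ => ?_
  rw [← neg_div_neg_eq]
  congr 1 <;> ring
end

section
/- Let f be a multiplicative arithmetic function with complex values and let s be a complex number. For each prime p set a_p = ∑_{m=1}^{∞} f(p^m)/p^{ms}, and assume a_p ≠ -1 for every prime p. Assume the series ∑_{n=1}^{∞} f(n)/n^s, ∑_p a_p/(1 + a_p) (over all primes p), and ∑_{n=1}^{∞} ω(n) f(n)/n^s all converge absolutely. Then ∑_{n=1}^{∞} ω(n) f(n)/n^s = (∑_{n=1}^{∞} f(n)/n^s) · (∑_p a_p/(1 + a_p)). -/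
/-! Since `ω(n) = ∑_{p ∣ n} 1`, absolute convergence lets us swap sums and write the left side
as `∑_p ∑_{p ∣ n} f(n)/n^s`. Factoring every `n ≠ 0` uniquely as `p^k m` with `p ∤ m`,
multiplicativity gives `∑_n f(n)/n^s = (1 + a_p) G_p` with `G_p = ∑_{p ∤ m} f(m)/m^s`, so the
inner sum is `∑_n f(n)/n^s - G_p = a_p/(1 + a_p) · ∑_n f(n)/n^s`. -/

open ArithmeticFunction

namespace Nat

theorem Prime.pow_mul_injective {p : ℕ} (hp : p.Prime) :
    Function.Injective fun x : ℕ × ↥({n : ℕ | p ∣ n}ᶜ) => p ^ x.1 * x.2 := by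
  rintro ⟨k, m, hm⟩ ⟨k', m', hm'⟩ h
  simp only at h
  obtain rfl : m = m' := by
    rw [← ordCompl_pow_mul_of_not_dvd k hp hm, h, ordCompl_pow_mul_of_not_dvd k' hp hm']
  have hm0 : m ≠ 0 := by rintro rfl; exact hm (dvd_zero p)
  simpa using
    Nat.pow_right_injective hp.two_le (Nat.eq_of_mul_eq_mul_right (pos_of_ne_zero hm0) h)

theorem Prime.mem_range_pow_mul {p n : ℕ} (hp : p.Prime) (hn : n ≠ 0) :
    n ∈ Set.range fun x : ℕ × ↥({n : ℕ | p ∣ n}ᶜ) => p ^ x.1 * x.2 :=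
  ⟨(n.factorization p, ⟨ordCompl[p] n, Nat.not_dvd_ordCompl hp hn⟩),
    Nat.ordProj_mul_ordCompl_eq_self n p⟩

theorem hasSum_primes_ite_dvd {M : Type*} [AddCommMonoid M] [TopologicalSpace M] {n : ℕ}
    (hn : n ≠ 0) (c : M) :
    HasSum (fun p : Nat.Primes => if (p : ℕ) ∣ n then c else 0)
      (n.primeFactors.card • c) := by
  have hfin : HasSum (fun q : ℕ => if q ∈ n.primeFactors then c else 0)
      (n.primeFactors.card • c) := by
    have := hasSum_sum_of_ne_finset_zero (L := SummationFilter.unconditional ℕ)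
      (f := fun q => if q ∈ n.primeFactors then c else 0) fun q hq => if_neg hq
    rwa [Finset.sum_ite_mem, Finset.inter_self, Finset.sum_const] at this
  have hprimes : HasSum (fun p : Nat.Primes => if (p : ℕ) ∈ n.primeFactors then c else 0)
      (n.primeFactors.card • c) :=
    (Nat.Primes.coe_nat_injective.hasSum_iff fun q hq =>
      if_neg fun h => hq ⟨⟨q, Nat.prime_of_mem_primeFactors h⟩, rfl⟩).2 hfin
  convert hprimes using 3 with p
  simp [Nat.mem_primeFactors, p.2, hn]

end Nat

theorem tsum_ite_dvd_eq_tsum_sub_tsum {E : Type*} [NormedAddCommGroup E] [CompleteSpace E]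
    {g : ℕ → E} (hg : Summable g) (p : ℕ) :
    ∑' n, (if p ∣ n then g n else 0) =
      ∑' n, g n - ∑' m : ↥({n : ℕ | p ∣ n}ᶜ), g m := by
  rw [← (hg.subtype _).tsum_add_tsum_compl (hg.subtype _), add_sub_cancel_right, tsum_subtype]
  simp only [Set.indicator_apply, Set.mem_ofPred_eq]

namespace ArithmeticFunction

theorem tsum_card_primeFactors_smul {E : Type*} [NormedAddCommGroup E] [CompleteSpace E]
    (g : ArithmeticFunction E) (hg : Summable fun n => n.primeFactors.card * ‖g n‖) :
    ∑' n, n.primeFactors.card • g n =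
      ∑' p : Nat.Primes, ∑' n, if (p : ℕ) ∣ n then g n else 0 := by
  have hslice (n : ℕ) : HasSum (fun p : Nat.Primes => if (p : ℕ) ∣ n then g n else 0)
      (n.primeFactors.card • g n) := by
    rcases eq_or_ne n 0 with rfl | hn
    · simp [hasSum_zero]
    · exact Nat.hasSum_primes_ite_dvd hn _
  have hnorm (n : ℕ) : HasSum (fun p : Nat.Primes => ‖if (p : ℕ) ∣ n then g n else 0‖)
      (n.primeFactors.card * ‖g n‖) := by
    rcases eq_or_ne n 0 with rfl | hn
    · simp [hasSum_zero]
    · simpa only [apply_ite norm, norm_zero, nsmul_eq_mul] using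
        Nat.hasSum_primes_ite_dvd hn ‖g n‖
  have hsum : Summable (Function.uncurry fun n (p : Nat.Primes) =>
      if (p : ℕ) ∣ n then g n else 0) := by
    refine Summable.of_norm ((summable_prod_of_nonneg fun _ => norm_nonneg _).2
      ⟨fun n => (hnorm n).summable, ?_⟩)
    exact hg.congr fun n => (hnorm n).tsum_eq.symm
  rw [hsum.tsum_comm]
  exact tsum_congr fun n => (hslice n).tsum_eq.symm

theorem IsMultiplicative.tsum_eq_tsum_pow_mul_tsum_not_dvd {R : Type*} [NormedRing R]
    [CompleteSpace R] {g : ArithmeticFunction R} (hg : g.IsMultiplicative)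
    (hsum : Summable fun n => ‖g n‖) {p : ℕ} (hp : p.Prime) :
    ∑' n, g n = (∑' k, g (p ^ k)) * ∑' m : ↥({n : ℕ | p ∣ n}ᶜ), g m := by
  rw [tsum_mul_tsum_of_summable_norm (hsum.comp_injective (Nat.pow_right_injective hp.two_le))
    (hsum.subtype _), ← hp.pow_mul_injective.tsum_eq fun n hn =>
      hp.mem_range_pow_mul (by rintro rfl; exact hn g.map_zero)]
  exact tsum_congr fun x =>
    hg.map_mul_of_coprime ((hp.coprime_iff_not_dvd.2 x.2.2).pow_left _)

noncomputable def lseriesTerm (f : ArithmeticFunction ℂ) (s : ℂ) : ArithmeticFunction ℂ :=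
  ⟨fun n => f n / (n : ℂ) ^ s, by simp⟩

@[simp]
theorem lseriesTerm_apply (f : ArithmeticFunction ℂ) (s : ℂ) (n : ℕ) :
    f.lseriesTerm s n = f n / (n : ℂ) ^ s :=
  rfl

theorem IsMultiplicative.lseriesTerm {f : ArithmeticFunction ℂ} (hf : f.IsMultiplicative)
    (s : ℂ) :
    (f.lseriesTerm s).IsMultiplicative := by
  refine ⟨by simp [hf.map_one], fun {m n} hmn => ?_⟩
  simp only [lseriesTerm_apply, hf.map_mul_of_coprime hmn, Nat.cast_mul,
    Complex.natCast_mul_natCast_cpow, div_mul_div_comm]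

end ArithmeticFunction

theorem stmt_12_general (f : ArithmeticFunction ℂ) (hf : f.IsMultiplicative) (s : ℂ)
    (a : Nat.Primes → ℂ)
    (ha : ∀ p : Nat.Primes,
      a p = ∑' m : ℕ, f ((p : ℕ) ^ (m + 1)) / ((p : ℕ) : ℂ) ^ (((m : ℂ) + 1) * s))
    (ha1 : ∀ p : Nat.Primes, a p ≠ -1)
    (h1 : Summable fun n : ℕ => ‖f n / (n : ℂ) ^ s‖)
    (h3 : Summable fun n : ℕ => ‖(n.primeFactors.card : ℂ) * f n / (n : ℂ) ^ s‖) :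
    ∑' n : ℕ, (n.primeFactors.card : ℂ) * f n / (n : ℂ) ^ s =
      (∑' n : ℕ, f n / (n : ℂ) ^ s) * ∑' p : Nat.Primes, a p / (1 + a p) := by
  set g := f.lseriesTerm s
  have hg : Summable fun n => ‖g n‖ := h1
  have hpow (p : Nat.Primes) : ∑' k, g ((p : ℕ) ^ k) = 1 + a p := by
    rw [(hg.comp_injective (Nat.pow_right_injective p.2.two_le)).of_norm.tsum_eq_zero_add, ha p]
    simp [g, hf.map_one, Nat.cast_pow, ← Complex.natCast_cpow_natCast_mul]
  have hdvd (p : Nat.Primes) :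
      ∑' n, (if (p : ℕ) ∣ n then g n else 0) = a p / (1 + a p) * ∑' n, g n := by
    have h1a : 1 + a p ≠ 0 := fun h => ha1 p (eq_neg_of_add_eq_zero_right h)
    rw [tsum_ite_dvd_eq_tsum_sub_tsum hg.of_norm,
      (hf.lseriesTerm s).tsum_eq_tsum_pow_mul_tsum_not_dvd hg p.2, hpow]
    field_simp
    ring
  calc ∑' n : ℕ, (n.primeFactors.card : ℂ) * f n / (n : ℂ) ^ s
      = ∑' n, n.primeFactors.card • g n := by simp [g, mul_div_assoc]
    _ = ∑' p : Nat.Primes, a p / (1 + a p) * ∑' n, g n :=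
        (tsum_card_primeFactors_smul g (by simpa [g, mul_div_assoc] using h3)).trans
          (tsum_congr hdvd)
    _ = _ := by rw [tsum_mul_right, mul_comm]; rfl

/-- For a multiplicative arithmetic function `f`, `s ∈ ℂ`, and
`a_p = ∑_{m ≥ 1} f(p^m)/p^{ms}` with `a_p ≠ -1`, given absolute convergence of
`∑ f(n)/n^s`, `∑_p a_p/(1 + a_p)` and `∑ ω(n) f(n)/n^s`, we have
`∑ ω(n) f(n)/n^s = (∑ f(n)/n^s) · (∑_p a_p/(1 + a_p))`. -/
theorem stmt_12 (f : ArithmeticFunction ℂ) (hf : f.IsMultiplicative) (s : ℂ)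
    (a : Nat.Primes → ℂ)
    (ha : ∀ p : Nat.Primes,
      a p = ∑' m : ℕ, f ((p : ℕ) ^ (m + 1)) / ((p : ℕ) : ℂ) ^ (((m : ℂ) + 1) * s))
    (ha1 : ∀ p : Nat.Primes, a p ≠ -1)
    (h1 : Summable fun n : ℕ => ‖f n / (n : ℂ) ^ s‖)
    (h2 : Summable fun p : Nat.Primes => ‖a p / (1 + a p)‖)
    (h3 : Summable fun n : ℕ => ‖(n.primeFactors.card : ℂ) * f n / (n : ℂ) ^ s‖) :
    ∑' n : ℕ, (n.primeFactors.card : ℂ) * f n / (n : ℂ) ^ s =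
      (∑' n : ℕ, f n / (n : ℂ) ^ s) * ∑' p : Nat.Primes, a p / (1 + a p) :=
  stmt_12_general f hf s a ha ha1 h1 h3
end

section
/- Let f be a completely multiplicative arithmetic function with complex values and let s be a complex number such that ∑_{n=1}^{∞} f(n)/n^s converges absolutely and ∑_{n=1}^{∞} ω(n) f(n)/n^s converges absolutely. Then ∑_{n=1}^{∞} ω(n) f(n)/n^s = (∑_{n=1}^{∞} f(n)/n^s) · (∑_p f(p)/p^s), where the last sum runs over all primes p. -/
/-!
Write `ω(n) g(n) = ∑_{p ∣ n} g(n)` with `g(n) = f(n)/n^s` and exchange the order of summation,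
which absolute convergence of `∑ ω(n) |g(n)|` permits. For a fixed prime `p`, substituting
`n = p m` and using `g(p m) = g(p) g(m)` turns the inner sum into `g(p) ∑_m g(m)`.
-/

theorem hasSum_primes_ite_dvd {M : Type*} [AddCommMonoid M] [TopologicalSpace M] {g : ℕ → M}
    (hg0 : g 0 = 0) (n : ℕ) :
    HasSum (fun p : Nat.Primes => if (p : ℕ) ∣ n then g n else 0) (n.primeFactors.card • g n) := by
  rcases eq_or_ne n 0 with rfl | hn
  · simp [hg0]
  let S : Finset Nat.Primes := n.primeFactors.subtype Nat.Prime
  have hmem {p : Nat.Primes} : p ∈ S ↔ (p : ℕ) ∣ n :=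
    Finset.mem_subtype.trans ((Nat.mem_primeFactors_of_ne_zero hn).trans (and_iff_right p.2))
  have hcard : S.card = n.primeFactors.card := (Finset.card_subtype _ _).trans
    (congrArg _ (Finset.filter_true_of_mem fun _ => Nat.prime_of_mem_primeFactors))
  have : HasSum (fun p : Nat.Primes => if (p : ℕ) ∣ n then g n else 0) _ :=
    hasSum_sum_of_ne_finset_zero (s := S) fun p hp => if_neg (mt hmem.2 hp)
  rwa [Finset.sum_congr rfl fun p hp => if_pos (hmem.1 hp), Finset.sum_const, hcard] at this

theorem tsum_ite_dvd_eq_tsum_mul_left {M : Type*} [AddCommMonoid M] [TopologicalSpace M]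
    (g : ℕ → M) {p : ℕ} (hp : p ≠ 0) :
    ∑' n, (if p ∣ n then g n else 0) = ∑' m, g (p * m) := by
  refine ((mul_right_injective₀ hp).tsum_eq fun n hn => ?_).symm.trans (tsum_congr fun m => ?_)
  · obtain ⟨m, rfl⟩ : p ∣ n := by by_contra h; exact hn (if_neg h)
    exact ⟨m, rfl⟩
  · exact if_pos (dvd_mul_right p m)

theorem tsum_card_primeFactors_mul_eq_tsum_mul_tsum_primes {𝕜 : Type*} [NormedField 𝕜]
    [CompleteSpace 𝕜] {g : ℕ → 𝕜} (hg0 : g 0 = 0)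
    (hmul : ∀ p m : ℕ, p.Prime → g (p * m) = g p * g m)
    (hω : Summable fun n => (n.primeFactors.card : ℝ) * ‖g n‖) :
    ∑' n, (n.primeFactors.card : 𝕜) * g n = (∑' n, g n) * ∑' p : Nat.Primes, g p := by
  set F : ℕ → Nat.Primes → 𝕜 := fun n p => if (p : ℕ) ∣ n then g n else 0
  have hrow (n : ℕ) : HasSum (F n) (n.primeFactors.card • g n) := hasSum_primes_ite_dvd hg0 n
  have hrow_norm (n : ℕ) : HasSum (fun p => ‖F n p‖) (n.primeFactors.card • ‖g n‖) := by
    simpa only [F, apply_ite, norm_zero] using hasSum_primes_ite_dvd (g := (‖g ·‖)) (by simp [hg0]) n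
  have hF : Summable (Function.uncurry F) := by
    refine Summable.of_norm ((summable_prod_of_nonneg fun _ => norm_nonneg _).2
      ⟨fun n => (hrow_norm n).summable, ?_⟩)
    simpa only [Function.uncurry_apply_pair, (hrow_norm _).tsum_eq, nsmul_eq_mul] using hω
  calc ∑' n, (n.primeFactors.card : 𝕜) * g n = ∑' n, ∑' p, F n p :=
        tsum_congr fun n => by rw [(hrow n).tsum_eq, nsmul_eq_mul]
    _ = ∑' p : Nat.Primes, ∑' n, F n p := hF.tsum_comm.symm
    _ = ∑' p : Nat.Primes, g p * ∑' n, g n := tsum_congr fun p => by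
        rw [tsum_ite_dvd_eq_tsum_mul_left _ p.2.ne_zero, ← tsum_mul_left]
        exact tsum_congr fun m => hmul p m p.2
    _ = (∑' n, g n) * ∑' p : Nat.Primes, g p := by rw [tsum_mul_right, mul_comm]

theorem stmt_13_general (f : ArithmeticFunction ℂ)
    (hf : ∀ m n : ℕ, f (m * n) = f m * f n) (s : ℂ)
    (h2 : Summable fun n : ℕ => ‖(n.primeFactors.card : ℂ) * f n / (n : ℂ) ^ s‖) :
    ∑' n : ℕ, (n.primeFactors.card : ℂ) * f n / (n : ℂ) ^ s =
      (∑' n : ℕ, f n / (n : ℂ) ^ s) *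
        ∑' p : Nat.Primes, f (p : ℕ) / ((p : ℕ) : ℂ) ^ s := by
  simp only [mul_div_assoc] at h2 ⊢
  refine tsum_card_primeFactors_mul_eq_tsum_mul_tsum_primes (by simp) (fun p m _ => ?_) ?_
  · simp only [hf, Nat.cast_mul, Complex.natCast_mul_natCast_cpow, div_mul_div_comm]
  · simpa only [norm_mul, Complex.norm_natCast] using h2

/-- For a completely multiplicative arithmetic function `f` and `s ∈ ℂ`
such that `∑ f(n)/n^s` and `∑ ω(n) f(n)/n^s` converge absolutely,
`∑ ω(n) f(n)/n^s = (∑ f(n)/n^s) · (∑_p f(p)/p^s)`. -/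
theorem stmt_13 (f : ArithmeticFunction ℂ) (hf1 : f 1 = 1)
    (hf : ∀ m n : ℕ, f (m * n) = f m * f n) (s : ℂ)
    (h1 : Summable fun n : ℕ => ‖f n / (n : ℂ) ^ s‖)
    (h2 : Summable fun n : ℕ => ‖(n.primeFactors.card : ℂ) * f n / (n : ℂ) ^ s‖) :
    ∑' n : ℕ, (n.primeFactors.card : ℂ) * f n / (n : ℂ) ^ s =
      (∑' n : ℕ, f n / (n : ℂ) ^ s) *
        ∑' p : Nat.Primes, f (p : ℕ) / ((p : ℕ) : ℂ) ^ s :=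
  stmt_13_general f hf s h2
end

section
/- Let s be a complex number with Re(s) > 1. Then ∑_{n=1}^{∞} |μ(n)| ω(n)/n^s = (ζ(s)/ζ(2s)) · P(s,1), where ζ is the Riemann zeta function and P(s,1) = ∑_p 1/(p^s + 1) is the shifted prime zeta function (the sum running over all primes p). -/
/-!
Write `a(n) = |μ(n)| n^{-s}` and `L = ∑ a(n)`. Since `a` is multiplicative with Euler factors
`1 + p^{-s}`, and `(1 + x)(1 - x²)⁻¹ = (1 - x)⁻¹`, the Euler products of `ζ` give
`L ζ(2s) = ζ(s)`. Expanding `ω(n) = ∑_{p ∣ n} 1` and swapping the absolutely convergent double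
sum reduces the theorem to `S_p := ∑_{p ∣ n} a(n) = L/(p^s + 1)`. This holds because
`a(pm) = p^{-s} a(m)` if `p ∤ m` and `a(pm) = 0` otherwise, so `S_p = p^{-s}(L - S_p)`.
-/

open ArithmeticFunction
open scoped ArithmeticFunction.Moebius

lemma norm_prime_cpow_neg (s : ℂ) (p : Nat.Primes) :
    ‖((p : ℕ) : ℂ) ^ (-s)‖ = ((p : ℕ) : ℝ) ^ (-s.re) := by
  rw [Complex.norm_natCast_cpow_of_pos p.prop.pos, Complex.neg_re]

lemma norm_prime_cpow_neg_lt_one {s : ℂ} (hs : 0 < s.re) (p : Nat.Primes) :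
    ‖((p : ℕ) : ℂ) ^ (-s)‖ < 1 := by
  rw [norm_prime_cpow_neg]
  exact Real.rpow_lt_one_of_one_lt_of_neg (mod_cast p.prop.one_lt) (neg_lt_zero.2 hs)

lemma one_add_mul_inv_one_sub_sq {K : Type*} [Field K] {x : K} (hx : 1 + x ≠ 0) :
    (1 + x) * (1 - x ^ 2)⁻¹ = (1 - x)⁻¹ := by
  rw [show 1 - x ^ 2 = (1 - x) * (1 + x) by ring, mul_inv, mul_left_comm, mul_inv_cancel₀ hx,
    mul_one]

lemma tsum_ite_dvd {M : Type*} [AddCommMonoid M] [TopologicalSpace M] (f : ℕ → M) {p : ℕ}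
    (hp : p ≠ 0) : ∑' n, (if p ∣ n then f n else 0) = ∑' m, f (p * m) := by
  rw [← (mul_right_injective₀ hp).tsum_eq]
  · simp
  · intro n hn
    obtain ⟨m, rfl⟩ : p ∣ n := by_contra fun h ↦ hn (if_neg h)
    exact ⟨m, rfl⟩

lemma tsum_primes_ite_dvd {M : Type*} [AddCommMonoid M] [TopologicalSpace M] {n : ℕ}
    (hn : n ≠ 0) (x : M) :
    ∑' p : Nat.Primes, (if (p : ℕ) ∣ n then x else 0) = n.primeFactors.card • x := by
  set P : Finset Nat.Primes := n.primeFactors.subtype Nat.Prime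
  have hP (p : Nat.Primes) : p ∈ P ↔ (p : ℕ) ∣ n :=
    Finset.mem_subtype.trans (by simp [hn, p.prop])
  have hcard : P.card = n.primeFactors.card :=
    (Finset.card_subtype _ _).trans
      (congrArg _ (Finset.filter_true_of_mem fun _ ↦ Nat.prime_of_mem_primeFactors))
  rw [tsum_eq_sum fun p hp ↦ if_neg ((hP p).not.1 hp),
    Finset.sum_congr rfl fun p hp ↦ if_pos ((hP p).1 hp), Finset.sum_const, hcard]

namespace ArithmeticFunction

variable {s : ℂ}

noncomputable def absMoebiusTerm (s : ℂ) (n : ℕ) : ℂ := ((μ n).natAbs : ℂ) / (n : ℂ) ^ s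

lemma absMoebiusTerm_zero : absMoebiusTerm s 0 = 0 := by
  simp [absMoebiusTerm]

lemma absMoebiusTerm_one : absMoebiusTerm s 1 = 1 := by
  simp [absMoebiusTerm]

lemma absMoebiusTerm_mul_of_coprime {m n : ℕ} (h : m.Coprime n) :
    absMoebiusTerm s (m * n) = absMoebiusTerm s m * absMoebiusTerm s n := by
  simp only [absMoebiusTerm, isMultiplicative_moebius.map_mul_of_coprime h, Int.natAbs_mul,
    Nat.cast_mul, Complex.natCast_mul_natCast_cpow]
  ring

lemma absMoebiusTerm_prime {p : ℕ} (hp : p.Prime) : absMoebiusTerm s p = (p : ℂ) ^ (-s) := by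
  simp [absMoebiusTerm, moebius_apply_prime hp, Complex.cpow_neg]

lemma absMoebiusTerm_prime_pow {p k : ℕ} (hp : p.Prime) (hk : 1 < k) :
    absMoebiusTerm s (p ^ k) = 0 := by
  simp [absMoebiusTerm, moebius_apply_prime_pow hp (by omega : k ≠ 0), show k ≠ 1 by omega]

lemma absMoebiusTerm_prime_mul {p : ℕ} (hp : p.Prime) (m : ℕ) :
    absMoebiusTerm s (p * m) = if p ∣ m then 0 else (p : ℂ) ^ (-s) * absMoebiusTerm s m := by
  split_ifs with hpm
  · have : ¬ Squarefree (p * m) := fun h ↦ hp.prime.not_isUnit (h p (mul_dvd_mul_left p hpm))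
    simp [absMoebiusTerm, moebius_eq_zero_of_not_squarefree this]
  · rw [absMoebiusTerm_mul_of_coprime ((hp.coprime_iff_not_dvd).2 hpm), absMoebiusTerm_prime hp]

lemma norm_absMoebiusTerm_prime_mul_le {p : ℕ} (hp : p.Prime) (m : ℕ) :
    ‖absMoebiusTerm s (p * m)‖ ≤ ‖(p : ℂ) ^ (-s)‖ * ‖absMoebiusTerm s m‖ := by
  rw [absMoebiusTerm_prime_mul hp]
  split_ifs
  · rw [norm_zero]
    positivity
  · rw [norm_mul]

lemma norm_absMoebiusTerm_le (n : ℕ) : ‖absMoebiusTerm s n‖ ≤ ‖1 / (n : ℂ) ^ s‖ := by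
  rw [absMoebiusTerm, norm_div, norm_div, norm_one, Complex.norm_natCast]
  gcongr
  have := abs_moebius_le_one (n := n)
  rw [Int.abs_eq_natAbs] at this
  exact_mod_cast this

lemma summable_norm_absMoebiusTerm (hs : 1 < s.re) : Summable (‖absMoebiusTerm s ·‖) :=
  (Complex.summable_one_div_nat_cpow.2 hs).norm.of_nonneg_of_le (fun _ ↦ norm_nonneg _)
    norm_absMoebiusTerm_le

lemma tsum_absMoebiusTerm_prime_pow {p : ℕ} (hp : p.Prime) :
    ∑' e, absMoebiusTerm s (p ^ e) = 1 + (p : ℂ) ^ (-s) := by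
  rw [tsum_eq_sum (s := Finset.range 2)
    fun e he ↦ absMoebiusTerm_prime_pow hp (by simpa using he)]
  simp [Finset.sum_range_succ, absMoebiusTerm_one, absMoebiusTerm_prime hp]

lemma hasProd_one_add_prime_cpow_neg (hs : 1 < s.re) :
    HasProd (fun p : Nat.Primes ↦ 1 + ((p : ℕ) : ℂ) ^ (-s)) (∑' n, absMoebiusTerm s n) := by
  convert EulerProduct.eulerProduct_hasProd absMoebiusTerm_one absMoebiusTerm_mul_of_coprime
    (summable_norm_absMoebiusTerm hs) absMoebiusTerm_zero using 2 with p
  exact (tsum_absMoebiusTerm_prime_pow p.prop).symm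

lemma tsum_absMoebiusTerm (hs : 1 < s.re) :
    ∑' n, absMoebiusTerm s n = riemannZeta s / riemannZeta (2 * s) := by
  have h2s : 1 < (2 * s).re := by simp; linarith
  have hprod := (hasProd_one_add_prime_cpow_neg hs).mul (riemannZeta_eulerProduct_hasProd h2s)
  have hfactor (p : Nat.Primes) : (1 + ((p : ℕ) : ℂ) ^ (-s)) * (1 - ((p : ℕ) : ℂ) ^ (-(2 * s)))⁻¹
      = (1 - ((p : ℕ) : ℂ) ^ (-s))⁻¹ := by
    have hne : 1 + ((p : ℕ) : ℂ) ^ (-s) ≠ 0 := fun h ↦ by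
      simpa [show ((p : ℕ) : ℂ) ^ (-s) = -1 by linear_combination h] using
        norm_prime_cpow_neg_lt_one (s := s) (by linarith) p
    rw [neg_mul_eq_mul_neg, show (2 : ℂ) = (2 : ℕ) by norm_num, Complex.cpow_nat_mul,
      one_add_mul_inv_one_sub_sq hne]
  simp only [hfactor] at hprod
  rw [eq_div_iff (riemannZeta_ne_zero_of_one_lt_re h2s)]
  exact hprod.unique (riemannZeta_eulerProduct_hasProd hs)

lemma summable_norm_ite_dvd_absMoebiusTerm (hs : 1 < s.re) (p : ℕ) :
    Summable fun n ↦ ‖if p ∣ n then absMoebiusTerm s n else 0‖ :=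
  (summable_norm_absMoebiusTerm hs).of_nonneg_of_le (fun _ ↦ norm_nonneg _)
    fun n ↦ by split_ifs <;> simp

lemma tsum_ite_dvd_absMoebiusTerm (hs : 1 < s.re) {p : ℕ} (hp : p.Prime) :
    ∑' n, (if p ∣ n then absMoebiusTerm s n else 0) =
      (∑' n, absMoebiusTerm s n) / ((p : ℂ) ^ s + 1) := by
  set S := ∑' n, (if p ∣ n then absMoebiusTerm s n else 0)
  set L := ∑' n, absMoebiusTerm s n
  have hrec : S = (p : ℂ) ^ (-s) * (L - S) := calc
    S = ∑' m, absMoebiusTerm s (p * m) := tsum_ite_dvd _ hp.ne_zero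
    _ = ∑' m, (p : ℂ) ^ (-s) * (absMoebiusTerm s m - if p ∣ m then absMoebiusTerm s m else 0) :=
      tsum_congr fun m ↦ by rw [absMoebiusTerm_prime_mul hp]; split_ifs <;> ring
    _ = (p : ℂ) ^ (-s) * (L - S) := by
      rw [tsum_mul_left, (summable_norm_absMoebiusTerm hs).of_norm.tsum_sub
        (summable_norm_ite_dvd_absMoebiusTerm hs p).of_norm]
  have hps : (p : ℂ) ^ s ≠ 0 := by simp [hp.ne_zero]
  have hps1 : (p : ℂ) ^ s + 1 ≠ 0 := fun h ↦ by
    simpa [Complex.cpow_neg, show (p : ℂ) ^ s = -1 by linear_combination h] using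
      norm_prime_cpow_neg_lt_one (s := s) (by linarith) ⟨p, hp⟩
  rw [Complex.cpow_neg] at hrec
  field_simp at hrec ⊢
  linear_combination hrec

lemma summable_uncurry_ite_dvd_absMoebiusTerm (hs : 1 < s.re) :
    Summable (Function.uncurry fun (p : Nat.Primes) (n : ℕ) ↦
      if (p : ℕ) ∣ n then absMoebiusTerm s n else 0) := by
  refine Summable.of_norm ((summable_prod_of_nonneg fun _ ↦ norm_nonneg _).2
    ⟨fun p ↦ summable_norm_ite_dvd_absMoebiusTerm hs p, ?_⟩)
  set C := ∑' m, ‖absMoebiusTerm s m‖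
  have hC := summable_norm_absMoebiusTerm hs
  refine ((Nat.Primes.summable_rpow.2 (by linarith : -s.re < -1)).mul_right C).of_nonneg_of_le
    (fun _ ↦ tsum_nonneg fun _ ↦ norm_nonneg _) fun p ↦ ?_
  calc ∑' n, ‖if (p : ℕ) ∣ n then absMoebiusTerm s n else 0‖
      = ∑' n, if (p : ℕ) ∣ n then ‖absMoebiusTerm s n‖ else 0 :=
        tsum_congr fun n ↦ by split_ifs <;> simp
    _ = ∑' m, ‖absMoebiusTerm s (p * m)‖ := tsum_ite_dvd _ p.prop.ne_zero
    _ ≤ ∑' m, ‖((p : ℕ) : ℂ) ^ (-s)‖ * ‖absMoebiusTerm s m‖ :=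
        have hle := norm_absMoebiusTerm_prime_mul_le (s := s) p.prop
        Summable.tsum_le_tsum hle
          ((hC.mul_left _).of_nonneg_of_le (fun _ ↦ norm_nonneg _) hle) (hC.mul_left _)
    _ = ((p : ℕ) : ℝ) ^ (-s.re) * C := by rw [tsum_mul_left, norm_prime_cpow_neg]

end ArithmeticFunction

/-- For `Re s > 1`,
`∑_{n ≥ 1} |μ(n)| ω(n)/n^s = (ζ(s)/ζ(2s)) · P(s, 1)`, where `P(s, 1) = ∑_p 1/(p^s + 1)`
is the shifted prime zeta function. -/
theorem stmt_19 (s : ℂ) (hs : 1 < s.re) :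
    ∑' n : ℕ, ((moebius n).natAbs : ℂ) * (n.primeFactors.card : ℂ) / (n : ℂ) ^ s =
      riemannZeta s / riemannZeta (2 * s) *
        ∑' p : Nat.Primes, 1 / (((p : ℕ) : ℂ) ^ s + 1) := by
  have hsplit (n : ℕ) : ((moebius n).natAbs : ℂ) * (n.primeFactors.card : ℂ) / (n : ℂ) ^ s =
      ∑' p : Nat.Primes, if (p : ℕ) ∣ n then absMoebiusTerm s n else 0 := by
    rcases eq_or_ne n 0 with rfl | hn
    · simp
    · rw [tsum_primes_ite_dvd hn, nsmul_eq_mul, absMoebiusTerm]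
      ring
  calc _ = ∑' (n : ℕ) (p : Nat.Primes), if (p : ℕ) ∣ n then absMoebiusTerm s n else 0 :=
        tsum_congr hsplit
    _ = ∑' (p : Nat.Primes) (n : ℕ), if (p : ℕ) ∣ n then absMoebiusTerm s n else 0 :=
        (summable_uncurry_ite_dvd_absMoebiusTerm hs).tsum_comm
    _ = ∑' p : Nat.Primes, (∑' n, absMoebiusTerm s n) * (1 / (((p : ℕ) : ℂ) ^ s + 1)) :=
        tsum_congr fun p ↦ by rw [tsum_ite_dvd_absMoebiusTerm hs p.prop, mul_one_div]
    _ = _ := by rw [tsum_mul_left, tsum_absMoebiusTerm hs]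
end
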